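/- arXiv:2207.05448 — 12 statements merged into one kernel-verified Lean document; each statement's English description precedes it below -/
import Mathlib

section
/- Let S be a semiring. Then the relation δ is a congruence of S. -/
universe u

/-- A semiring in the sense of the paper: a (nonempty) set with an associative
commutative addition and an associative multiplication distributing over
addition from both sides.  No additive or multiplicative identity is assumed. -/
class PaperSemiring (S : Type*) extends Add S, Mul S where
  add_assoc : ∀ a b c : S, a + b + c = a + (b + c)
  add_comm : ∀ a b : S, a + b = b + a
  mul_assoc : ∀ a b c : S, a * b * c = a * (b * c)
  left_distrib : ∀ a b c : S, a * (b + c) = a * b + a * c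
  right_distrib : ∀ a b c : S, (a + b) * c = a * c + b * c

/-- `nfoldAdd n x` is the `n`-fold sum `x + ⋯ + x` (only meaningful for `n ≥ 1`;
we set `nfoldAdd 0 x = x` as a junk value). -/
def nfoldAdd {S : Type*} [Add S] : ℕ → S → S
  | 0, x => x
  | 1, x => x
  | n + 2, x => nfoldAdd (n + 1) x + x

/-- `nfoldMul n x` is the `n`-fold product `x * ⋯ * x` (only meaningful for `n ≥ 1`;
we set `nfoldMul 0 x = x` as a junk value). -/
def nfoldMul {S : Type*} [Mul S] : ℕ → S → S
  | 0, x => x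
  | 1, x => x
  | n + 2, x => nfoldMul (n + 1) x * x

/-- `w` is multiplicatively absorbing. -/
def MulAbsorbing {S : Type*} [Mul S] (w : S) : Prop :=
  ∀ x : S, x * w = w ∧ w * x = w

/-- `w` is a zero element: multiplicatively absorbing and additively neutral. -/
def IsZeroElem {S : Type*} [Add S] [Mul S] (w : S) : Prop :=
  MulAbsorbing w ∧ ∀ x : S, x + w = x

/-- `w` is bi-absorbing: multiplicatively and additively absorbing. -/
def BiAbsorbing {S : Type*} [Add S] [Mul S] (w : S) : Prop :=
  MulAbsorbing w ∧ ∀ x : S, x + w = w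

/-- `I` is an ideal: nonempty, `I+I ⊆ I`, `S·I ⊆ I`, `I·S ⊆ I`. -/
def IsIdealSet {S : Type*} [Add S] [Mul S] (I : Set S) : Prop :=
  I.Nonempty ∧ (∀ a ∈ I, ∀ b ∈ I, a + b ∈ I) ∧
    ∀ s : S, ∀ a ∈ I, s * a ∈ I ∧ a * s ∈ I

/-- `I` is a bi-ideal: nonempty, `S+I ⊆ I`, `S·I ⊆ I`, `I·S ⊆ I`. -/
def IsBiIdealSet {S : Type*} [Add S] [Mul S] (I : Set S) : Prop :=
  I.Nonempty ∧ (∀ s : S, ∀ a ∈ I, s + a ∈ I) ∧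
    ∀ s : S, ∀ a ∈ I, s * a ∈ I ∧ a * s ∈ I

/-- The relation `α_I`:  `(x,y) ∈ α_I` iff `x + a = y + b` for some `a, b ∈ I`. -/
def alphaRel {S : Type*} [Add S] (I : Set S) (x y : S) : Prop :=
  ∃ a ∈ I, ∃ b ∈ I, x + a = y + b

/-- The relation `β_J = (J×J) ∪ id`. -/
def betaRel {S : Type*} (J : Set S) (x y : S) : Prop :=
  (x ∈ J ∧ y ∈ J) ∨ x = y

/-- The relation `γ_n`: `(x,y) ∈ γ_n` iff `n·x = n·y`. -/
def gammaRel {S : Type*} [Add S] (n : ℕ) (x y : S) : Prop :=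
  nfoldAdd n x = nfoldAdd n y

/-- The relation `δ`: `(x,y) ∈ δ` iff `2^i·x = y + u` and `2^i·y = x + v` for
some `i ≥ 0` and `u, v ∈ S`. -/
def deltaRel {S : Type*} [Add S] (x y : S) : Prop :=
  ∃ (i : ℕ) (u v : S), nfoldAdd (2 ^ i) x = y + u ∧ nfoldAdd (2 ^ i) y = x + v

/-- A congruence: an equivalence relation compatible with both operations. -/
def IsCongruence {S : Type*} [Add S] [Mul S] (r : S → S → Prop) : Prop :=
  Equivalence r ∧ (∀ x x' y y' : S, r x x' → r y y' → r (x + y) (x' + y')) ∧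
    ∀ x x' y y' : S, r x x' → r y y' → r (x * y) (x' * y')

/-- `S` is congruence-simple: it has just two congruences (the identity relation
and the full relation, which are distinct). -/
def CongSimple (S : Type*) [Add S] [Mul S] : Prop :=
  (∃ x y : S, x ≠ y) ∧
    ∀ r : S → S → Prop, IsCongruence r → (∀ x y, r x y ↔ x = y) ∨ ∀ x y, r x y

/-- The two-element semiring `𝕋₄`. -/
inductive T4 : Type where | a | b

instance : Add T4 := ⟨fun x y => match x, y with | .a, .a => .a | _, _ => .b⟩
instance : Mul T4 := ⟨fun x y => match x, y with | .b, .b => .b | _, _ => .a⟩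

/-- The two-element semiring `𝕋₈`. -/
inductive T8 : Type where | a | b

instance : Add T8 := ⟨fun _ _ => .a⟩
instance : Mul T8 := ⟨fun x y => match x, y with | .b, .b => .b | _, _ => .a⟩

/-- Isomorphism of semirings (as sets with two binary operations). -/
def SIso (S T : Type*) [Add S] [Mul S] [Add T] [Mul T] : Prop :=
  ∃ f : S ≃ T, (∀ x y : S, f (x + y) = f x + f y) ∧ ∀ x y : S, f (x * y) = f x * f y

/-- Addition of the semiring `V(G)` on `Option G` (`none` plays the role of `o`):
`x + x = x` and `x + y = o` for `x ≠ y`. -/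
noncomputable def vAdd {G : Type*} (x y : Option G) : Option G :=
  haveI := Classical.decEq (Option G)
  if x = y then x else none

/-- Multiplication of the semiring `V(G)` on `Option G`: it extends the one of `G`,
and `o` is multiplicatively absorbing. -/
def vMul {G : Type*} [Mul G] : Option G → Option G → Option G
  | some x, some y => some (x * y)
  | _, _ => none


/-!
Say `y` divides a multiple of `x` when `n·x = y + u` for some `n ≥ 1` and `u`. Such an equation
persists when `n` grows, so the power of two in `δ` may be replaced by any positive multiple,
and `δ` is the symmetric part of this relation. The relation is a preorder (`n·(m·x) = (nm)·x`)
compatible with addition (pass to a common multiple) and with multiplication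
(`(m·x)(n·y) = (mn)·(xy)` by distributivity), and the symmetric part of such a preorder is a
congruence.
-/

section

variable {S : Type*} [PaperSemiring S]

instance : AddCommSemigroup S where
  add_assoc := PaperSemiring.add_assoc
  add_comm := PaperSemiring.add_comm

instance : Distrib S where
  left_distrib := PaperSemiring.left_distrib
  right_distrib := PaperSemiring.right_distrib

theorem nfoldAdd_succ {n : ℕ} (hn : n ≠ 0) (x : S) :
    nfoldAdd (n + 1) x = nfoldAdd n x + x := by
  obtain ⟨m, rfl⟩ := Nat.exists_eq_succ_of_ne_zero hn
  rfl

theorem add_nfoldAdd {m n : ℕ} (hm : m ≠ 0) (hn : n ≠ 0) (x : S) :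
    nfoldAdd (m + n) x = nfoldAdd m x + nfoldAdd n x := by
  induction n with
  | zero => exact absurd rfl hn
  | succ k ih =>
    rcases Nat.eq_zero_or_pos k with rfl | hk
    · exact nfoldAdd_succ hm x
    · rw [← add_assoc, nfoldAdd_succ (by omega), ih hk.ne', nfoldAdd_succ hk.ne', add_assoc]

theorem nfoldAdd_add {n : ℕ} (hn : n ≠ 0) (x y : S) :
    nfoldAdd n (x + y) = nfoldAdd n x + nfoldAdd n y := by
  induction n with
  | zero => exact absurd rfl hn
  | succ k ih =>
    rcases Nat.eq_zero_or_pos k with rfl | hk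
    · rfl
    · rw [nfoldAdd_succ hk.ne', nfoldAdd_succ hk.ne', nfoldAdd_succ hk.ne', ih hk.ne',
        add_add_add_comm]

theorem nfoldAdd_mul (n : ℕ) (x y : S) : nfoldAdd n x * y = nfoldAdd n (x * y) := by
  induction n with
  | zero => rfl
  | succ k ih =>
    rcases Nat.eq_zero_or_pos k with rfl | hk
    · rfl
    · rw [nfoldAdd_succ hk.ne', nfoldAdd_succ hk.ne', add_mul, ih]

theorem mul_nfoldAdd (n : ℕ) (x y : S) : x * nfoldAdd n y = nfoldAdd n (x * y) := by
  induction n with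
  | zero => rfl
  | succ k ih =>
    rcases Nat.eq_zero_or_pos k with rfl | hk
    · rfl
    · rw [nfoldAdd_succ hk.ne', nfoldAdd_succ hk.ne', mul_add, ih]

theorem nfoldAdd_nfoldAdd {m n : ℕ} (hm : m ≠ 0) (hn : n ≠ 0) (x : S) :
    nfoldAdd m (nfoldAdd n x) = nfoldAdd (m * n) x := by
  induction m with
  | zero => exact absurd rfl hm
  | succ k ih =>
    rcases Nat.eq_zero_or_pos k with rfl | hk
    · rw [zero_add, one_mul]; rfl
    · rw [nfoldAdd_succ hk.ne', ih hk.ne', add_one_mul, add_nfoldAdd (by positivity) hn]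

theorem exists_nfoldAdd_eq_add_of_le {m n : ℕ} (hm : m ≠ 0) (hmn : m ≤ n) {x y u : S}
    (h : nfoldAdd m x = y + u) : ∃ u', nfoldAdd n x = y + u' := by
  obtain ⟨k, rfl⟩ := Nat.exists_eq_add_of_le hmn
  rcases Nat.eq_zero_or_pos k with rfl | hk
  · exact ⟨u, h⟩
  · exact ⟨u + nfoldAdd k x, by rw [add_nfoldAdd hm hk.ne', h, add_assoc]⟩

def AddDvdMultiple (y x : S) : Prop :=
  ∃ n ≠ 0, ∃ u, nfoldAdd n x = y + u

namespace AddDvdMultiple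

theorem refl (x : S) : AddDvdMultiple x x :=
  ⟨2, two_ne_zero, x, rfl⟩

theorem trans {x y z : S} (hzy : AddDvdMultiple z y) (hyx : AddDvdMultiple y x) :
    AddDvdMultiple z x := by
  obtain ⟨m, hm, u, hx⟩ := hyx
  obtain ⟨n, hn, w, hy⟩ := hzy
  refine ⟨n * m, mul_ne_zero hn hm, w + nfoldAdd n u, ?_⟩
  rw [← nfoldAdd_nfoldAdd hn hm, hx, nfoldAdd_add hn, hy, add_assoc]

theorem add {x x' y y' : S} (h : AddDvdMultiple y x) (h' : AddDvdMultiple y' x') :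
    AddDvdMultiple (y + y') (x + x') := by
  obtain ⟨m, hm, _, hx⟩ := h
  obtain ⟨n, hn, _, hx'⟩ := h'
  obtain ⟨u, hu⟩ := exists_nfoldAdd_eq_add_of_le hm (le_max_left m n) hx
  obtain ⟨u', hu'⟩ := exists_nfoldAdd_eq_add_of_le hn (le_max_right m n) hx'
  refine ⟨max m n, by positivity, u + u', ?_⟩
  rw [nfoldAdd_add (by positivity), hu, hu', add_add_add_comm]

theorem mul {x x' y y' : S} (h : AddDvdMultiple y x) (h' : AddDvdMultiple y' x') :
    AddDvdMultiple (y * y') (x * x') := by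
  obtain ⟨m, hm, u, hx⟩ := h
  obtain ⟨n, hn, u', hx'⟩ := h'
  refine ⟨m * n, mul_ne_zero hm hn, y * u' + u * (y' + u'), ?_⟩
  calc nfoldAdd (m * n) (x * x')
      = nfoldAdd m x * nfoldAdd n x' := by
        rw [nfoldAdd_mul, mul_nfoldAdd, nfoldAdd_nfoldAdd hm hn]
    _ = y * y' + (y * u' + u * (y' + u')) := by
        rw [hx, hx', add_mul, mul_add, add_assoc]

end AddDvdMultiple

theorem deltaRel_iff {x y : S} : deltaRel x y ↔ AddDvdMultiple y x ∧ AddDvdMultiple x y := by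
  constructor
  · rintro ⟨i, u, v, hx, hy⟩
    exact ⟨⟨2 ^ i, by positivity, u, hx⟩, ⟨2 ^ i, by positivity, v, hy⟩⟩
  · rintro ⟨⟨m, hm, _, hx⟩, ⟨n, hn, _, hy⟩⟩
    have hm' : m ≤ 2 ^ (m + n) := (Nat.le_add_right m n).trans Nat.lt_two_pow_self.le
    have hn' : n ≤ 2 ^ (m + n) := (Nat.le_add_left n m).trans Nat.lt_two_pow_self.le
    obtain ⟨u, hu⟩ := exists_nfoldAdd_eq_add_of_le hm hm' hx
    obtain ⟨v, hv⟩ := exists_nfoldAdd_eq_add_of_le hn hn' hy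
    exact ⟨m + n, u, v, hu, hv⟩

end

theorem stmt_2_general {S : Type*} [PaperSemiring S] :
    IsCongruence (deltaRel (S := S)) := by
  have hδ : deltaRel (S := S) = fun x y => AddDvdMultiple y x ∧ AddDvdMultiple x y :=
    funext₂ fun _ _ => propext deltaRel_iff
  rw [hδ]
  refine ⟨⟨fun x => ⟨.refl x, .refl x⟩, fun h => h.symm, ?_⟩, ?_, ?_⟩
  · exact fun h h' => ⟨h'.1.trans h.1, h.2.trans h'.2⟩
  · exact fun _ _ _ _ h h' => ⟨h.1.add h'.1, h.2.add h'.2⟩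
  · exact fun _ _ _ _ h h' => ⟨h.1.mul h'.1, h.2.mul h'.2⟩

/-- Let `S` be a semiring.  Then the relation `δ` is a congruence
of `S`. -/
theorem stmt_2 {S : Type*} [PaperSemiring S] [Nonempty S] :
    IsCongruence (deltaRel (S := S)) :=
  stmt_2_general
end

section
/- Let S be a semiring and I a bi-ideal of S. Then β_I ⊆ α_I, and β_I = α_I if and only if I = S. -/
universe u

/-!
If `i ∈ I` and `I` absorbs addition, then `x + (y + i) = y + (x + i)` with both `y + i` and
`x + i` in `I`, so `α_I` relates any two elements. Hence `β_I ⊆ α_I`, and `β_I = α_I` forces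
every `x` to be `β_I`-related to `i`, i.e. `x ∈ I`.
-/

instance PaperSemiring.toAddCommSemigroup {S : Type*} [PaperSemiring S] : AddCommSemigroup S where
  add_assoc := PaperSemiring.add_assoc
  add_comm := PaperSemiring.add_comm

theorem alphaRel_of_nonempty_of_add_mem {S : Type*} [AddCommSemigroup S] {I : Set S}
    (hne : I.Nonempty) (hadd : ∀ s : S, ∀ a ∈ I, s + a ∈ I) (x y : S) : alphaRel I x y :=
  let ⟨i, hi⟩ := hne
  ⟨y + i, hadd y i hi, x + i, hadd x i hi, add_left_comm x y i⟩

theorem betaRel_univ {S : Type*} (x y : S) : betaRel Set.univ x y :=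
  Or.inl ⟨trivial, trivial⟩

theorem eq_univ_of_forall_betaRel {S : Type*} {I : Set S} (hne : I.Nonempty)
    (h : ∀ x y : S, betaRel I x y) : I = Set.univ := by
  obtain ⟨i, hi⟩ := hne
  refine Set.eq_univ_of_forall fun x => ?_
  rcases h x i with ⟨hx, -⟩ | rfl
  exacts [hx, hi]

/-- Let `S` be a semiring and `I` a bi-ideal of `S`.  Then
`β_I ⊆ α_I`, and `β_I = α_I` if and only if `I = S`. -/
theorem stmt_4 {S : Type*} [PaperSemiring S] (I : Set S) (hI : IsBiIdealSet I) :
    (∀ x y : S, betaRel I x y → alphaRel I x y) ∧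
      ((∀ x y : S, betaRel I x y ↔ alphaRel I x y) ↔ I = Set.univ) := by
  obtain ⟨hne, hadd, -⟩ := hI
  have hα := alphaRel_of_nonempty_of_add_mem hne hadd
  refine ⟨fun x y _ => hα x y, fun h => ?_, fun h x y => ?_⟩
  · exact eq_univ_of_forall_betaRel hne fun x y => (h x y).2 (hα x y)
  · subst h
    exact iff_of_true (betaRel_univ x y) (hα x y)
end

section
/- Let S be a semiring. If γ_2 = S×S and γ_3 = id_S, then S is a ring of characteristic 2; that is, S possesses a zero element 0_S and x + x = 0_S for every x ∈ S (so (S,+) is an abelian group in which every element is its own additive inverse). -/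
universe u

/- Since `γ₂` is full, all doubles `x + x` coincide; call the common value `z`. Distributivity
makes `z` multiplicatively absorbing, and `3·x = z + x` gives `3·(x + z) = x + z + z = x + z = 3·x`,
so `γ₃ = id` forces `x + z = x`. -/

namespace PaperSemiring

variable {S : Type*} [PaperSemiring S]

theorem mul_add_self (hd : ∀ x y : S, x + x = y + y) (x y : S) : x * (y + y) = y + y := by
  rw [left_distrib, hd]

theorem add_self_mul (hd : ∀ x y : S, x + x = y + y) (x y : S) : (y + y) * x = y + y := by
  rw [right_distrib, hd]

theorem nfoldAdd_three_eq (hd : ∀ x y : S, x + x = y + y) (x y : S) :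
    nfoldAdd 3 x = x + (y + y) := by
  show x + x + x = _
  rw [hd x y, add_comm]

theorem add_add_self (hd : ∀ x y : S, x + x = y + y) (h3 : ∀ x y : S, gammaRel 3 x y ↔ x = y)
    (x y : S) : x + (y + y) = x := by
  refine (h3 _ _).mp ?_
  rw [gammaRel, nfoldAdd_three_eq hd _ y, nfoldAdd_three_eq hd x y, add_assoc, hd (y + y) y]

end PaperSemiring

/-- Let `S` be a semiring.  If `γ_2 = S×S` and `γ_3 = id_S`, then
`S` is a ring of characteristic `2`: `S` possesses a zero element `0_S` and
`x + x = 0_S` for every `x ∈ S`. -/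
theorem stmt_6 {S : Type*} [PaperSemiring S] [Nonempty S]
    (h2 : ∀ x y : S, gammaRel 2 x y) (h3 : ∀ x y : S, gammaRel 3 x y ↔ x = y) :
    ∃ z : S, IsZeroElem z ∧ ∀ x : S, x + x = z := by
  obtain ⟨y⟩ := ‹Nonempty S›
  have hd : ∀ x y : S, x + x = y + y := h2
  refine ⟨y + y, ⟨fun x => ⟨?_, ?_⟩, fun x => ?_⟩, fun x => hd x y⟩
  · exact PaperSemiring.mul_add_self hd x y
  · exact PaperSemiring.add_self_mul hd x y
  · exact PaperSemiring.add_add_self hd h3 x y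
end

section
/- Let S be a semiring. Then δ = id_S if and only if S is additively idempotent, i.e., x + x = x for every x ∈ S. -/
universe u

section AddCommSemigroup

variable {S : Type*} [AddCommSemigroup S]

theorem nfoldAdd_of_add_self {x : S} (h : x + x = x) : ∀ n, nfoldAdd n x = x
  | 0 => rfl
  | 1 => rfl
  | n + 2 => by rw [nfoldAdd, nfoldAdd_of_add_self h (n + 1), h]

theorem add_eq_left_of_eq_add_of_add_self {x y u : S} (hy : y + y = y) (hx : x = y + u) :
    x + y = x := by
  rw [hx, add_right_comm, add_assoc, ← add_assoc y, hy]

-- `i = 2` is the least exponent that works: with `i = 1` we would need `x + x = x + x + v`.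
theorem deltaRel_add_self_self (x : S) : deltaRel (x + x) x :=
  ⟨2, x + x + x + x + x + x + x, x + x,
    show x + x + (x + x) + (x + x) + (x + x) = _ by ac_rfl,
    show x + x + x + x = _ by ac_rfl⟩

theorem deltaRel_self_of_add_self {x : S} (h : x + x = x) : deltaRel x x :=
  ⟨0, x, x, h.symm, h.symm⟩

theorem eq_of_deltaRel_of_add_self (hS : ∀ x : S, x + x = x) {x y : S} (hxy : deltaRel x y) :
    x = y := by
  obtain ⟨i, u, v, hu, hv⟩ := hxy
  rw [nfoldAdd_of_add_self (hS x)] at hu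
  rw [nfoldAdd_of_add_self (hS y)] at hv
  calc x = x + y := (add_eq_left_of_eq_add_of_add_self (hS y) hu).symm
    _ = y + x := add_comm x y
    _ = y := add_eq_left_of_eq_add_of_add_self (hS x) hv

end AddCommSemigroup

/-- Let `S` be a semiring.  Then `δ = id_S` if and only if `S` is
additively idempotent. -/
theorem stmt_8 {S : Type*} [PaperSemiring S] :
    (∀ x y : S, deltaRel x y ↔ x = y) ↔ ∀ x : S, x + x = x := by
  refine ⟨fun hδ x => (hδ (x + x) x).mp (deltaRel_add_self_self x), fun hS x y => ?_⟩
  exact ⟨eq_of_deltaRel_of_add_self hS, fun hxy => hxy ▸ deltaRel_self_of_add_self (hS x)⟩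
end

section
/- Let S be a semiring with a multiplicatively absorbing element w. Then S + w := {x + w : x ∈ S} is a bi-ideal of S; moreover, S + w is a one-element set if and only if w is bi-absorbing, and S + w = S if and only if w is a zero element of S. -/
universe u

/-! Distributivity gives `w * (w + w) = w * w + w * w`, and absorption turns this into
`w = w + w`. Hence `w ∈ S + w`, and `S + w` is closed under adding anything, since
`s + (x + w) = (s + x) + w`, and under multiplying, since `s * (x + w) = s * x + w`.
If `S + w = {z}` then `z = w`, so `x + w = w` for all `x`; if `S + w = S` then every
`x = y + w` satisfies `x + w = y + (w + w) = x`. -/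

namespace MulAbsorbing

variable {S : Type*} [PaperSemiring S] {w : S}

theorem add_self (hw : MulAbsorbing w) : w + w = w := by
  have h := PaperSemiring.left_distrib w w w
  rwa [(hw w).2, (hw (w + w)).2, eq_comm] at h

theorem mem_add_right (hw : MulAbsorbing w) : w ∈ {y : S | ∃ x : S, y = x + w} :=
  ⟨w, hw.add_self.symm⟩

theorem isBiIdealSet_add_right (hw : MulAbsorbing w) :
    IsBiIdealSet {y : S | ∃ x : S, y = x + w} := by
  refine ⟨⟨w, hw.mem_add_right⟩, ?_, ?_⟩
  · rintro s _ ⟨x, rfl⟩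
    exact ⟨s + x, (PaperSemiring.add_assoc s x w).symm⟩
  · rintro s _ ⟨x, rfl⟩
    exact ⟨⟨s * x, by rw [PaperSemiring.left_distrib, (hw s).1]⟩,
      ⟨x * s, by rw [PaperSemiring.right_distrib, (hw s).2]⟩⟩

theorem add_right_eq_singleton_iff (hw : MulAbsorbing w) :
    (∃ z : S, {y : S | ∃ x : S, y = x + w} = {z}) ↔ BiAbsorbing w := by
  constructor
  · rintro ⟨z, hz⟩
    have hwz : w ∈ ({z} : Set S) := hz ▸ hw.mem_add_right
    refine ⟨hw, fun x => ?_⟩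
    have hx : x + w ∈ ({z} : Set S) := hz ▸ ⟨x, rfl⟩
    rw [Set.mem_singleton_iff.1 hx, Set.mem_singleton_iff.1 hwz]
  · rintro ⟨-, hw_add⟩
    refine ⟨w, Set.eq_singleton_iff_unique_mem.2 ⟨hw.mem_add_right, ?_⟩⟩
    rintro _ ⟨x, rfl⟩
    exact hw_add x

theorem add_right_eq_univ_iff (hw : MulAbsorbing w) :
    {y : S | ∃ x : S, y = x + w} = Set.univ ↔ IsZeroElem w := by
  constructor
  · intro hu
    refine ⟨hw, fun x => ?_⟩
    obtain ⟨y, rfl⟩ : x ∈ {y : S | ∃ x : S, y = x + w} := hu ▸ Set.mem_univ x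
    rw [PaperSemiring.add_assoc, hw.add_self]
  · rintro ⟨-, hw_add⟩
    exact Set.eq_univ_of_forall fun x => ⟨x, (hw_add x).symm⟩

end MulAbsorbing

/-- Let `S` be a semiring with a multiplicatively absorbing
element `w`.  Then `S + w` is a bi-ideal of `S`; moreover `S + w` is a
one-element set iff `w` is bi-absorbing, and `S + w = S` iff `w` is a zero
element of `S`. -/
theorem stmt_9 {S : Type*} [PaperSemiring S] (w : S) (hw : MulAbsorbing w) :
    IsBiIdealSet {y : S | ∃ x : S, y = x + w} ∧
      ((∃ z : S, {y : S | ∃ x : S, y = x + w} = {z}) ↔ BiAbsorbing w) ∧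
      ({y : S | ∃ x : S, y = x + w} = Set.univ ↔ IsZeroElem w) :=
  ⟨hw.isBiIdealSet_add_right, hw.add_right_eq_singleton_iff, hw.add_right_eq_univ_iff⟩
end

section
/- Let S be a semiring with a multiplicatively absorbing element w such that x² ≠ w for every x ∈ S with x ≠ w. Then for every a ∈ S the left annihilator (a:w)_ℓ = {x ∈ S : x·a = w} equals the right annihilator (a:w)_r = {x ∈ S : a·x = w}, and this common set (a:w) is an ideal of S. -/
universe u

section PaperSemiring

variable {S : Type*} [PaperSemiring S] {w : S}

theorem MulAbsorbing.add_self_s10 (hw : MulAbsorbing w) : w + w = w :=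
  calc w + w = (w + w) * w := by rw [PaperSemiring.right_distrib, (hw w).1]
    _ = w := (hw (w + w)).1

-- `(a * x) * (a * x) = a * (x * a) * x = w`, so `a * x` cannot differ from `w`.
theorem MulAbsorbing.mul_eq_of_mul_eq (hw : MulAbsorbing w)
    (hnil : ∀ x : S, x ≠ w → x * x ≠ w) {a x : S} (hxa : x * a = w) : a * x = w := by
  by_contra hax
  refine hnil (a * x) hax ?_
  rw [PaperSemiring.mul_assoc, ← PaperSemiring.mul_assoc x, hxa, (hw x).2, (hw a).1]

theorem MulAbsorbing.mul_eq_comm (hw : MulAbsorbing w)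
    (hnil : ∀ x : S, x ≠ w → x * x ≠ w) {a x : S} : x * a = w ↔ a * x = w :=
  ⟨hw.mul_eq_of_mul_eq hnil, hw.mul_eq_of_mul_eq hnil⟩

theorem MulAbsorbing.isIdealSet_setOf_mul_eq (hw : MulAbsorbing w)
    (hnil : ∀ x : S, x ≠ w → x * x ≠ w) (a : S) : IsIdealSet {x : S | x * a = w} := by
  refine ⟨⟨w, (hw a).2⟩, fun x hx y hy => ?_, fun s x hx => ⟨?_, ?_⟩⟩
  · change (x + y) * a = w
    rw [PaperSemiring.right_distrib, hx, hy, hw.add_self_s10]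
  · change s * x * a = w
    rw [PaperSemiring.mul_assoc, hx, (hw s).1]
  · change x * s * a = w
    rw [hw.mul_eq_comm hnil, ← PaperSemiring.mul_assoc, hw.mul_eq_of_mul_eq hnil hx, (hw s).2]

end PaperSemiring

/-- Let `S` be a semiring with a multiplicatively absorbing
element `w` such that `x² ≠ w` for every `x ≠ w`.  Then for every `a ∈ S`
the left annihilator `(a:w)_ℓ` equals the right annihilator `(a:w)_r`, and
this common set `(a:w)` is an ideal of `S`. -/
theorem stmt_10 {S : Type*} [PaperSemiring S] (w : S) (hw : MulAbsorbing w)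
    (hnil : ∀ x : S, x ≠ w → x * x ≠ w) (a : S) :
    {x : S | x * a = w} = {x : S | a * x = w} ∧
      IsIdealSet {x : S | x * a = w} :=
  ⟨Set.ext fun _ => hw.mul_eq_comm hnil, hw.isIdealSet_setOf_mul_eq hnil a⟩
end

section
/- Let S be a semiring with a multiplicatively absorbing element w such that x² ≠ w for every x ∈ S with x ≠ w, and let a ∈ S. If α_{(a:w)} = id_S, then w is a zero element of S (w = 0_S), a·b ≠ 0_S ≠ b·a for every b ∈ S with b ≠ w, and either |S| = 1 or a ≠ 0_S. -/
universe u

/-! The annihilator `(a:w)` always contains `w`, and `α_{(a:w)} = id` forces it to be the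
singleton `{w}`. Since `w + w = w` for a multiplicatively absorbing `w`, the pair
`(x + w, x)` lies in `α_{(a:w)}`, so `w` is additively neutral. The hypothesis `x² ≠ w`
makes `(a:w)` two-sided, so `a·b = w` or `b·a = w` puts `b` in `{w}`; and if `a = w`
then `(a:w)` is all of `S`. -/

namespace PaperSemiring

variable {S : Type*} [PaperSemiring S]

theorem add_self_of_mulAbsorbing {w : S} (hw : MulAbsorbing w) : w + w = w :=
  calc w + w = w * (w + w) := by rw [left_distrib, (hw w).1]
    _ = w := (hw _).2

theorem mul_rev_eq_of_mul_eq {w : S} (hw : MulAbsorbing w)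
    (hnil : ∀ x : S, x ≠ w → x * x ≠ w) {b c : S} (hbc : b * c = w) : c * b = w := by
  by_contra hcb
  refine hnil _ hcb ?_
  calc c * b * (c * b) = c * (b * c) * b := by rw [mul_assoc, mul_assoc, mul_assoc]
    _ = w := by rw [hbc, (hw c).1, (hw b).2]

theorem subsingleton_of_alphaRel_iff_eq {I : Set S} (hI : ∀ x y : S, alphaRel I x y ↔ x = y) :
    I.Subsingleton := fun u hu v hv => (hI u v).mp ⟨v, hv, u, hu, add_comm u v⟩

theorem add_eq_self_of_alphaRel_iff_eq {I : Set S}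
    (hI : ∀ x y : S, alphaRel I x y ↔ x = y) {w : S} (hwI : w ∈ I) (hww : w + w = w) (x : S) :
    x + w = x :=
  (hI (x + w) x).mp ⟨w, hwI, w, hwI, by rw [add_assoc, hww]⟩

end PaperSemiring

/-- Let `S` be a semiring with a multiplicatively absorbing
element `w` such that `x² ≠ w` for every `x ≠ w`, and let `a ∈ S`.  If
`α_{(a:w)} = id_S`, then `w` is a zero element of `S`, `a·b ≠ 0_S ≠ b·a` for
every `b ≠ w`, and either `|S| = 1` or `a ≠ 0_S`. -/
theorem stmt_11 {S : Type*} [PaperSemiring S] (w : S) (hw : MulAbsorbing w)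
    (hnil : ∀ x : S, x ≠ w → x * x ≠ w) (a : S)
    (h : ∀ x y : S, alphaRel {x : S | x * a = w} x y ↔ x = y) :
    IsZeroElem w ∧ (∀ b : S, b ≠ w → a * b ≠ w ∧ b * a ≠ w) ∧
      ((∀ x y : S, x = y) ∨ a ≠ w) := by
  have hwI : w * a = w := (hw a).2
  have eq_w_of_mul_eq : ∀ x : S, x * a = w → x = w := fun x hx =>
    PaperSemiring.subsingleton_of_alphaRel_iff_eq h hx hwI
  have hzero : ∀ x : S, x + w = x :=
    PaperSemiring.add_eq_self_of_alphaRel_iff_eq h hwI (PaperSemiring.add_self_of_mulAbsorbing hw)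
  refine ⟨⟨hw, hzero⟩,
    fun b hb => ⟨fun hab => ?_, fun hba => hb (eq_w_of_mul_eq b hba)⟩, ?_⟩
  · exact hb (eq_w_of_mul_eq b (PaperSemiring.mul_rev_eq_of_mul_eq hw hnil hab))
  by_cases haw : a = w
  · have hall : ∀ x : S, x = w := fun x => eq_w_of_mul_eq x (haw ▸ (hw x).1)
    exact Or.inl fun x y => (hall x).trans (hall y).symm
  · exact Or.inr haw
end

section
/- Let S be a semiring with a zero element 0_S that is multiplicatively absorbing, such that x² ≠ 0_S for every x ∈ S with x ≠ 0_S, and let a ∈ S. Then 0_S ∈ (a:0_S), and (a:0_S) is a block of the congruence α_{(a:0_S)}; that is, (a:0_S) is exactly the equivalence class of 0_S: whenever (x, 0_S) ∈ α_{(a:0_S)}, one has x ∈ (a:0_S). -/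
universe u

theorem mul_eq_of_alphaRel {S : Type*} [PaperSemiring S] {z a x y : S} (hz : ∀ s : S, s + z = s)
    (hxy : alphaRel {s : S | s * a = z} x y) (hy : y * a = z) : x * a = z := by
  obtain ⟨u, hu : u * a = z, v, hv : v * a = z, h⟩ := hxy
  calc x * a = x * a + u * a := by rw [hu, hz]
    _ = (x + u) * a := (PaperSemiring.right_distrib x u a).symm
    _ = (y + v) * a := by rw [h]
    _ = y * a + v * a := PaperSemiring.right_distrib y v a
    _ = z := by rw [hy, hv, hz]

theorem alphaRel_of_mem {S : Type*} [PaperSemiring S] {I : Set S} {z x : S}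
    (hz : ∀ s : S, s + z = s) (hzI : z ∈ I) (hxI : x ∈ I) : alphaRel I x z :=
  ⟨z, hzI, x, hxI, by rw [hz, PaperSemiring.add_comm, hz]⟩

theorem stmt_12_general {S : Type*} [PaperSemiring S] (z : S) (hz : IsZeroElem z) (a : S) :
    z ∈ {x : S | x * a = z} ∧
      ∀ x : S, alphaRel {y : S | y * a = z} x z ↔ x * a = z := by
  have hza : z * a = z := (hz.1 a).2
  refine ⟨hza, fun x => ⟨fun h => ?_, fun hx => ?_⟩⟩
  · exact mul_eq_of_alphaRel hz.2 h hza
  · exact alphaRel_of_mem hz.2 hza hx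

/-- Let `S` be a semiring with a zero element `0_S` (which is
multiplicatively absorbing) such that `x² ≠ 0_S` for every `x ≠ 0_S`, and let
`a ∈ S`.  Then `0_S ∈ (a:0_S)` and `(a:0_S)` is a block of the congruence
`α_{(a:0_S)}`, i.e. it is exactly the equivalence class of `0_S`. -/
theorem stmt_12 {S : Type*} [PaperSemiring S] (z : S) (hz : IsZeroElem z)
    (hnil : ∀ x : S, x ≠ z → x * x ≠ z) (a : S) :
    z ∈ {x : S | x * a = z} ∧
      ∀ x : S, alphaRel {y : S | y * a = z} x z ↔ x * a = z :=
  stmt_12_general z hz a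
end

section
/- Let S be a semiring with a zero element 0_S that is multiplicatively absorbing, such that x² ≠ 0_S for every x ∈ S with x ≠ 0_S, and let a ∈ S. If α_{(a:0_S)} = S×S, then a = 0_S. -/
universe u

theorem mul_eq_mul_of_alphaRel_annihilator {S : Type*} [PaperSemiring S] {z a x y : S}
    (hz : ∀ s : S, s + z = s) (hxy : alphaRel {s : S | s * a = z} x y) :
    x * a = y * a := by
  obtain ⟨u, hu, v, hv, huv⟩ := hxy
  calc x * a = (x + u) * a := by rw [PaperSemiring.right_distrib, hu, hz]
    _ = (y + v) * a := by rw [huv]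
    _ = y * a := by rw [PaperSemiring.right_distrib, hv, hz]

/-- Let `S` be a semiring with a zero element `0_S` (which is
multiplicatively absorbing) such that `x² ≠ 0_S` for every `x ≠ 0_S`, and let
`a ∈ S`.  If `α_{(a:0_S)} = S×S`, then `a = 0_S`. -/
theorem stmt_13 {S : Type*} [PaperSemiring S] (z : S) (hz : IsZeroElem z)
    (hnil : ∀ x : S, x ≠ z → x * x ≠ z) (a : S)
    (h : ∀ x y : S, alphaRel {x : S | x * a = z} x y) :
    a = z := by
  by_contra hne
  have hsq : a * a = z :=
    (mul_eq_mul_of_alphaRel_annihilator hz.2 (h a z)).trans (hz.1 a).2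
  exact hnil a hne hsq
end

section
/- Let S be a semiring with a bi-absorbing element o_S such that x² ≠ o_S for every x ∈ S with x ≠ o_S, and let a ∈ S. Then (a:o_S) is a bi-ideal of S and α_{(a:o_S)} = S×S. -/
universe u

/-!
If `x * x = o` forces `x = o`, annihilators are two-sided: from `x * a = o` we get
`(a * x) * (a * x) = a * (x * a) * x = o`, hence `a * x = o`, and then
`(x * s * a) * (x * s * a) = x * s * (a * x) * (s * a) = o`, hence `x * s * a = o`.
The relation `α` is full because the bi-absorbing `o` lies in `(a:o)` and swallows both sides.
-/

instance PaperSemiring.toSemigroup {S : Type*} [PaperSemiring S] : Semigroup S where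
  mul_assoc := PaperSemiring.mul_assoc

section Reduced

variable {S : Type*} [Semigroup S] {o : S}

theorem eq_of_mul_self_eq (hred : ∀ x : S, x ≠ o → x * x ≠ o) {x : S} (hx : x * x = o) :
    x = o :=
  not_not.mp fun h => hred x h hx

theorem mul_swap_eq_of_mul_eq (ho : MulAbsorbing o) (hred : ∀ x : S, x ≠ o → x * x ≠ o)
    {x y : S} (h : x * y = o) : y * x = o :=
  eq_of_mul_self_eq hred <| calc
    y * x * (y * x) = y * (x * y * x) := by simp only [mul_assoc]
    _ = o := by rw [h, (ho x).2, (ho y).1]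

theorem mul_mul_eq_of_mul_eq (ho : MulAbsorbing o) (hred : ∀ x : S, x ≠ o → x * x ≠ o)
    {x y : S} (h : x * y = o) (s : S) : x * s * y = o :=
  eq_of_mul_self_eq hred <| calc
    x * s * y * (x * s * y) = x * s * (y * x) * (s * y) := by simp only [mul_assoc]
    _ = o := by rw [mul_swap_eq_of_mul_eq ho hred h, (ho (x * s)).1, (ho (s * y)).2]

end Reduced

theorem isBiIdealSet_setOf_mul_eq {S : Type*} [PaperSemiring S] {o : S} (ho : BiAbsorbing o)
    (hred : ∀ x : S, x ≠ o → x * x ≠ o) (a : S) : IsBiIdealSet {x : S | x * a = o} := by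
  obtain ⟨hmul, hadd⟩ := ho
  refine ⟨⟨o, (hmul a).2⟩, fun s x hx => ?_,
    fun s x hx => ⟨?_, mul_mul_eq_of_mul_eq hmul hred hx s⟩⟩
  · change (s + x) * a = o
    rw [PaperSemiring.right_distrib, hx, hadd]
  · change s * x * a = o
    rw [mul_assoc, hx, (hmul s).1]

theorem alphaRel_of_absorbing_mem {S : Type*} [Add S] {I : Set S} {o : S}
    (hadd : ∀ x : S, x + o = o) (hoI : o ∈ I) (x y : S) : alphaRel I x y :=
  ⟨o, hoI, o, hoI, by rw [hadd, hadd]⟩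

/-- Let `S` be a semiring with a bi-absorbing element `o_S` such
that `x² ≠ o_S` for every `x ≠ o_S`, and let `a ∈ S`.  Then `(a:o_S)` is a
bi-ideal of `S` and `α_{(a:o_S)} = S×S`. -/
theorem stmt_14 {S : Type*} [PaperSemiring S] (o : S) (ho : BiAbsorbing o)
    (hnil : ∀ x : S, x ≠ o → x * x ≠ o) (a : S) :
    IsBiIdealSet {x : S | x * a = o} ∧
      ∀ x y : S, alphaRel {x : S | x * a = o} x y :=
  ⟨isBiIdealSet_setOf_mul_eq ho hnil a, alphaRel_of_absorbing_mem ho.2 (ho.1 a).2⟩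
end

section
/- Let S be a congruence-simple semiring with a multiplicatively absorbing element w such that x² ≠ w for every x ∈ S with x ≠ w. Then either w is a zero element of S (w = 0_S) or w is a bi-absorbing element of S (w = o_S). -/
universe u

/-!
An absorbing `w` is additively idempotent (`w + w = w * (w + w) = w`) and satisfies
`(x + w) * z = x * z + w`, so `x ~ y :⟺ x + w = y + w` is a congruence. If it is the identity,
then `x + w ~ x` gives `x + w = x`; if it is the full relation, then `x ~ w` gives `x + w = w`.
-/

namespace MulAbsorbing

variable {S : Type*} [PaperSemiring S] {w : S}

theorem add_add_self (hw : MulAbsorbing w) (x y : S) : x + y + w = x + w + (y + w) := by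
  have : Std.Associative (fun a b : S => a + b) := ⟨PaperSemiring.add_assoc⟩
  have : Std.Commutative (fun a b : S => a + b) := ⟨PaperSemiring.add_comm⟩
  calc x + y + w = x + y + (w + w) := by rw [hw.add_self]
    _ = x + w + (y + w) := by ac_rfl

theorem isCongruence_add_eq_add (hw : MulAbsorbing w) :
    IsCongruence (fun x y : S => x + w = y + w) := by
  refine ⟨⟨fun _ => rfl, Eq.symm, Eq.trans⟩, ?_, ?_⟩
  · intro x x' y y' hx hy
    rw [hw.add_add_self, hw.add_add_self, hx, hy]
  · intro x x' y y' hx hy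
    have hleft : x * y + w = x' * y + w := by
      simpa only [PaperSemiring.right_distrib, (hw y).2] using congrArg (· * y) hx
    have hright : x' * y + w = x' * y' + w := by
      simpa only [PaperSemiring.left_distrib, (hw x').1] using congrArg (x' * ·) hy
    exact hleft.trans hright

end MulAbsorbing

theorem stmt_15_general {S : Type*} [PaperSemiring S] (hs : CongSimple S) (w : S)
    (hw : MulAbsorbing w) :
    (∀ x : S, x + w = x) ∨ ∀ x : S, x + w = w := by
  rcases hs.2 _ hw.isCongruence_add_eq_add with hid | hfull
  · refine Or.inl fun x => (hid (x + w) x).1 ?_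
    rw [PaperSemiring.add_assoc, hw.add_self]
  · exact Or.inr fun x => (hfull x w).trans hw.add_self

/-- Let `S` be a congruence-simple semiring with a
multiplicatively absorbing element `w` such that `x² ≠ w` for every `x ≠ w`.
Then either `w = 0_S` (a zero element) or `w = o_S` (a bi-absorbing element). -/
theorem stmt_15 {S : Type*} [PaperSemiring S] (hs : CongSimple S) (w : S)
    (hw : MulAbsorbing w) (hnil : ∀ x : S, x ≠ w → x * x ≠ w) :
    (∀ x : S, x + w = x) ∨ ∀ x : S, x + w = w :=
  stmt_15_general hs w hw
end

section
/- Let S be a congruence-simple semiring with a bi-absorbing element o_S such that x² ≠ o_S for every x ∈ S with x ≠ o_S. Then exactly one of the following holds: (1) S is isomorphic to the two-element semiring 𝕋₈; (2) S + S = S and a·b ≠ o_S for all a, b ∈ S with a ≠ o_S and b ≠ o_S. -/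
universe u

/-! The set `S + S` and the left annihilator of any `a ≠ o` are bi-ideals. Congruence-simplicity
forces a bi-ideal to be `{o}` or `S` (it is a class of the Rees congruence `betaRel`), so `S` has
no zero divisors, and either `S + S = S` or all sums are `o`. In the latter case "equal, or both
nonzero" is a congruence, hence the identity, so `S = {o, u}` with `u² = u`: this is `𝕋₈`. -/

section BiIdeal

variable {S : Type*} [PaperSemiring S]

theorem betaRel_isCongruence {J : Set S} (hJ : IsBiIdealSet J) : IsCongruence (betaRel J) := by
  obtain ⟨-, hadd, hmul⟩ := hJ
  have hadd' : ∀ a ∈ J, ∀ s : S, a + s ∈ J := fun a ha s =>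
    PaperSemiring.add_comm s a ▸ hadd s a ha
  refine ⟨⟨fun _ => Or.inr rfl, ?_, ?_⟩, ?_, ?_⟩
  · rintro x y (⟨hx, hy⟩ | rfl)
    exacts [Or.inl ⟨hy, hx⟩, Or.inr rfl]
  · rintro x y z (⟨hx, hy⟩ | rfl) (⟨hy', hz⟩ | rfl)
    exacts [Or.inl ⟨hx, hz⟩, Or.inl ⟨hx, hy⟩, Or.inl ⟨hy', hz⟩, Or.inr rfl]
  · rintro x x' y y' (⟨hx, hx'⟩ | rfl) (⟨hy, hy'⟩ | rfl)
    exacts [Or.inl ⟨hadd x y hy, hadd x' y' hy'⟩, Or.inl ⟨hadd' x hx y, hadd' x' hx' y⟩,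
      Or.inl ⟨hadd x y hy, hadd x y' hy'⟩, Or.inr rfl]
  · rintro x x' y y' (⟨hx, hx'⟩ | rfl) (⟨hy, hy'⟩ | rfl)
    exacts [Or.inl ⟨(hmul x y hy).1, (hmul x' y' hy').1⟩, Or.inl ⟨(hmul y x hx).2, (hmul y x' hx').2⟩,
      Or.inl ⟨(hmul x y hy).1, (hmul x y' hy').1⟩, Or.inr rfl]

theorem IsBiIdealSet.subsingleton_or_eq_univ (hs : CongSimple S) {J : Set S}
    (hJ : IsBiIdealSet J) : J.Subsingleton ∨ J = Set.univ := by
  rcases hs.2 (betaRel J) (betaRel_isCongruence hJ) with hid | hfull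
  · exact Or.inl fun x hx y hy => (hid x y).1 (Or.inl ⟨hx, hy⟩)
  · refine Or.inr (Set.eq_univ_of_forall fun z => ?_)
    by_contra hz
    have hJz : ∀ x, z = x := fun x => (hfull z x).resolve_left fun h => hz h.1
    obtain ⟨x, y, hxy⟩ := hs.1
    exact hxy ((hJz x).symm.trans (hJz y))

theorem isBiIdealSet_addRange [Nonempty S] : IsBiIdealSet {c : S | ∃ x y : S, x + y = c} := by
  obtain ⟨s⟩ := ‹Nonempty S›
  refine ⟨⟨s + s, s, s, rfl⟩, ?_, ?_⟩
  · rintro t _ ⟨x, y, rfl⟩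
    exact ⟨t + x, y, PaperSemiring.add_assoc t x y⟩
  · rintro t _ ⟨x, y, rfl⟩
    exact ⟨⟨t * x, t * y, (PaperSemiring.left_distrib t x y).symm⟩,
      ⟨x * t, y * t, (PaperSemiring.right_distrib x y t).symm⟩⟩

end BiIdeal

section ZeroDivisors

variable {S : Type*} [PaperSemiring S] {o : S}

theorem mul_eq_absorbing_swap (ho : MulAbsorbing o) (hnil : ∀ x : S, x ≠ o → x * x ≠ o)
    {u v : S} (h : u * v = o) : v * u = o := by
  by_contra hvu
  apply hnil (v * u) hvu
  calc v * u * (v * u) = v * (u * v * u) := by simp only [PaperSemiring.mul_assoc]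
    _ = o := by rw [h, (ho u).2, (ho v).1]

theorem isBiIdealSet_leftAnnihilator (ho : BiAbsorbing o) (hnil : ∀ x : S, x ≠ o → x * x ≠ o)
    (a : S) : IsBiIdealSet {x : S | x * a = o} := by
  refine ⟨⟨o, (ho.1 a).2⟩, fun s x (hx : x * a = o) => ?_, fun s x (hx : x * a = o) => ⟨?_, ?_⟩⟩
  · show (s + x) * a = o
    rw [PaperSemiring.right_distrib, hx, ho.2]
  · show s * x * a = o
    rw [PaperSemiring.mul_assoc, hx, (ho.1 s).1]
  · show x * s * a = o
    apply mul_eq_absorbing_swap ho.1 hnil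
    rw [← PaperSemiring.mul_assoc, mul_eq_absorbing_swap ho.1 hnil hx, (ho.1 s).2]

theorem mul_ne_absorbing (hs : CongSimple S) (ho : BiAbsorbing o)
    (hnil : ∀ x : S, x ≠ o → x * x ≠ o) {a b : S} (ha : a ≠ o) (hb : b ≠ o) : a * b ≠ o := by
  intro hab
  rcases (isBiIdealSet_leftAnnihilator ho hnil a).subsingleton_or_eq_univ hs with h | h
  · exact hb (h (mul_eq_absorbing_swap ho.1 hnil hab) (ho.1 a).2)
  · exact hnil a ha (Set.eq_univ_iff_forall.mp h a)

end ZeroDivisors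

section TwoElement

variable {S : Type*} [Add S] [Mul S] {o : S}

theorem isCongruence_eq_or_both_ne (ho : MulAbsorbing o) (hsum : ∀ x y : S, x + y = o)
    (hmul : ∀ a b : S, a ≠ o → b ≠ o → a * b ≠ o) :
    IsCongruence fun x y : S => x = y ∨ (x ≠ o ∧ y ≠ o) := by
  refine ⟨⟨fun _ => Or.inl rfl, ?_, ?_⟩, fun x x' y y' _ _ => Or.inl ((hsum x y).trans
    (hsum x' y').symm), ?_⟩
  · rintro x y (rfl | ⟨hx, hy⟩)
    exacts [Or.inl rfl, Or.inr ⟨hy, hx⟩]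
  · rintro x y z (rfl | ⟨hx, hy⟩) (rfl | ⟨hy', hz⟩)
    exacts [Or.inl rfl, Or.inr ⟨hy', hz⟩, Or.inr ⟨hx, hy⟩, Or.inr ⟨hx, hz⟩]
  · have key : ∀ x x' y y' : S, x ≠ o → x' ≠ o → (y = y' ∨ (y ≠ o ∧ y' ≠ o)) →
        x * y = x' * y' ∨ (x * y ≠ o ∧ x' * y' ≠ o) := by
      rintro x x' y y' hx hx' (rfl | ⟨hy, hy'⟩)
      · by_cases hy : y = o
        · exact Or.inl (by rw [hy, (ho x).1, (ho x').1])
        · exact Or.inr ⟨hmul x y hx hy, hmul x' y hx' hy⟩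
      · exact Or.inr ⟨hmul x y hx hy, hmul x' y' hx' hy'⟩
    rintro x x' y y' (rfl | ⟨hx, hx'⟩) hyy'
    · by_cases hx : x = o
      · exact Or.inl (by rw [hx, (ho y).2, (ho y').2])
      · exact key x x y y' hx hx hyy'
    · exact key x x' y y' hx hx' hyy'

theorem sIso_T8_of_add_eq_absorbing (hs : CongSimple S) (ho : MulAbsorbing o)
    (hsum : ∀ x y : S, x + y = o) (hmul : ∀ a b : S, a ≠ o → b ≠ o → a * b ≠ o) :
    SIso S T8 := by
  classical
  obtain ⟨u, hu⟩ : ∃ u : S, u ≠ o := by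
    obtain ⟨x, y, hxy⟩ := hs.1
    by_cases hx : x = o
    exacts [⟨y, fun hy => hxy (hx.trans hy.symm)⟩, ⟨x, hx⟩]
  have hunique : ∀ x y : S, x ≠ o → y ≠ o → x = y := by
    rcases hs.2 _ (isCongruence_eq_or_both_ne ho hsum hmul) with hid | hfull
    · exact fun x y hx hy => (hid x y).1 (Or.inr ⟨hx, hy⟩)
    · exact absurd (hfull o u) (by tauto)
  let f : S → T8 := fun x => if x = o then .a else .b
  have hf_o : f o = .a := if_pos rfl
  have hf_ne : ∀ x, x ≠ o → f x = .b := fun x hx => if_neg hx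
  have hbij : Function.Bijective f := by
    refine ⟨fun x y hxy => ?_, ?_⟩
    · by_cases hx : x = o <;> by_cases hy : y = o <;> simp_all [f, hunique x y]
    · rintro (_ | _)
      exacts [⟨o, hf_o⟩, ⟨u, hf_ne u hu⟩]
  refine ⟨Equiv.ofBijective f hbij, fun x y => if_pos (hsum x y), fun x y => ?_⟩
  simp only [Equiv.ofBijective_apply]
  by_cases hx : x = o
  · rw [hx, (ho y).2, hf_o]
    cases f y <;> rfl
  by_cases hy : y = o
  · rw [hy, (ho x).1, hf_o]
    cases f x <;> rfl
  rw [hf_ne x hx, hf_ne y hy, hf_ne _ (hmul x y hx hy)]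
  rfl

theorem not_forall_exists_add_eq_of_sIso_T8 (h : SIso S T8) : ¬∀ c : S, ∃ x y : S, x + y = c := by
  obtain ⟨f, hadd, -⟩ := h
  intro hsurj
  obtain ⟨x, y, hxy⟩ := hsurj (f.symm .b)
  have : f (x + y) = .b := by rw [hxy, f.apply_symm_apply]
  rw [hadd] at this
  exact T8.noConfusion this

end TwoElement

/-- Let `S` be a congruence-simple semiring with a bi-absorbing
element `o_S` such that `x² ≠ o_S` for every `x ≠ o_S`.  Then exactly one of
the following holds: (1) `S ≅ 𝕋₈`; (2) `S + S = S` and `a·b ≠ o_S` for all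
`a, b ≠ o_S`. -/
theorem stmt_17 {S : Type*} [PaperSemiring S] (hs : CongSimple S) (o : S)
    (ho : BiAbsorbing o) (hnil : ∀ x : S, x ≠ o → x * x ≠ o) :
    (SIso S T8 ∧
        ¬((∀ c : S, ∃ x y : S, x + y = c) ∧
          ∀ a b : S, a ≠ o → b ≠ o → a * b ≠ o)) ∨
      (¬SIso S T8 ∧
        (∀ c : S, ∃ x y : S, x + y = c) ∧
          ∀ a b : S, a ≠ o → b ≠ o → a * b ≠ o) := by
  have hmul : ∀ a b : S, a ≠ o → b ≠ o → a * b ≠ o := fun a b =>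
    mul_ne_absorbing hs ho hnil
  have : Nonempty S := ⟨o⟩
  have hT8 : SIso S T8 ↔ ¬∀ c : S, ∃ x y : S, x + y = c := by
    refine ⟨not_forall_exists_add_eq_of_sIso_T8, fun hnot => ?_⟩
    rcases isBiIdealSet_addRange.subsingleton_or_eq_univ hs with hsub | huniv
    · exact sIso_T8_of_add_eq_absorbing hs ho.1
        (fun x y => hsub ⟨x, y, rfl⟩ ⟨o, o, ho.2 o⟩) hmul
    · exact absurd (Set.eq_univ_iff_forall.mp huniv) hnot
  tauto
end
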